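/- arXiv:2605.09986 — 5 statements merged into one kernel-verified Lean document; each statement's English description precedes it below -/
import Mathlib

section
/- For any vectors a, b in ℝ^V, the softmax function satisfies ‖softmax(a) − softmax(b)‖₁ ≤ (1/2)‖a − b‖₁, where softmax(z)_v = exp(z_v) / Σ_w exp(z_w). -/
/-!
Changing a single coordinate `z i` to `c` changes `softmax z i` from `σ (z i - log R)` to
`σ (c - log R)`, where `R` is the total weight `∑ j ≠ i, exp (z j)` of the other coordinates,
and scales all other coordinates by a common factor; as the total mass stays `1`, their total
change is the same amount. Since `σ' = σ (1 - σ) ≤ 1/4`, the ℓ¹ change is at most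
`|c - z i| / 2`. Moving from `a` to `b` one coordinate at a time and using the triangle inequality
gives the theorem.
-/

noncomputable def softmax {V : ℕ} (z : Fin V → ℝ) : Fin V → ℝ :=
  fun v => Real.exp (z v) / ∑ w, Real.exp (z w)

open Real Finset Function

lemma Real.lipschitzWith_sigmoid : LipschitzWith 4⁻¹ sigmoid := by
  refine lipschitzWith_of_nnnorm_deriv_le differentiable_sigmoid fun x ↦ ?_
  rw [← NNReal.coe_le_coe, coe_nnnorm, deriv_sigmoid, Real.norm_eq_abs,
    abs_of_nonneg (mul_nonneg (sigmoid_nonneg x) (sub_nonneg.2 (sigmoid_le_one x)))]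
  push_cast
  nlinarith [sq_nonneg (sigmoid x - 2⁻¹)]

lemma Real.div_exp_add_eq_sigmoid {R : ℝ} (hR : 0 < R) (x : ℝ) :
    R / (exp x + R) = sigmoid (log R - x) := by
  rw [sigmoid_def, neg_sub, exp_sub, exp_log hR]
  field_simp
  ring

lemma Real.abs_div_exp_add_sub_le {R : ℝ} (hR : 0 ≤ R) (x y : ℝ) :
    |R / (exp x + R) - R / (exp y + R)| ≤ |x - y| / 4 := by
  rcases hR.eq_or_lt with rfl | hR
  · simp only [zero_div, sub_self, abs_zero]; positivity
  rw [div_exp_add_eq_sigmoid hR, div_exp_add_eq_sigmoid hR, ← Real.dist_eq]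
  calc dist (sigmoid (log R - x)) (sigmoid (log R - y))
      ≤ 4⁻¹ * dist (log R - x) (log R - y) := lipschitzWith_sigmoid.dist_le_mul _ _
    _ = dist x y / 4 := by rw [dist_sub_left, div_eq_inv_mul]

theorem dist_le_mul_sum_of_dist_update_le {ι E : Type*} [Fintype ι] [DecidableEq ι]
    [PseudoMetricSpace E] (f : (ι → ℝ) → E) {K : ℝ}
    (hf : ∀ z i c, dist (f (update z i c)) (f z) ≤ K * |c - z i|) (a b : ι → ℝ) :
    dist (f a) (f b) ≤ K * ∑ i, |a i - b i| := by
  suffices h : ∀ s : Finset ι, dist (f a) (f (s.piecewise b a)) ≤ K * ∑ i ∈ s, |a i - b i| by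
    simpa using h univ
  intro s
  induction s using Finset.induction_on with
  | empty => simp
  | insert j s hj ih =>
    have hstep := hf (s.piecewise b a) j (b j)
    rw [piecewise_eq_of_notMem _ _ _ hj, abs_sub_comm] at hstep
    rw [piecewise_insert, sum_insert hj]
    linarith [dist_triangle (f a) (f (s.piecewise b a)) (f (update (s.piecewise b a) j (b j))),
      dist_comm (f (s.piecewise b a)) (f (update (s.piecewise b a) j (b j)))]

lemma sum_exp_update {V : ℕ} (z : Fin V → ℝ) (i : Fin V) (c : ℝ) :
    ∑ w, exp (update z i c w) = exp c + ∑ w ∈ univ.erase i, exp (z w) := by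
  rw [← add_sum_erase _ _ (mem_univ i), update_self]
  congr 1
  exact sum_congr rfl fun w hw ↦ by rw [update_of_ne (ne_of_mem_erase hw)]

lemma softmax_update_self {V : ℕ} (z : Fin V → ℝ) (i : Fin V) (c : ℝ) :
    softmax (update z i c) i = exp c / (exp c + ∑ w ∈ univ.erase i, exp (z w)) := by
  rw [softmax, sum_exp_update, update_self]

lemma softmax_update_of_ne {V : ℕ} (z : Fin V → ℝ) {i j : Fin V} (h : j ≠ i) (c : ℝ) :
    softmax (update z i c) j = exp (z j) / (exp c + ∑ w ∈ univ.erase i, exp (z w)) := by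
  rw [softmax, sum_exp_update, update_of_ne h]

lemma sum_abs_softmax_update_sub_le {V : ℕ} (z : Fin V → ℝ) (i : Fin V) (c x : ℝ) :
    ∑ j, |softmax (update z i c) j - softmax (update z i x) j| ≤ |c - x| / 2 := by
  set R := ∑ w ∈ univ.erase i, exp (z w)
  have hR : 0 ≤ R := sum_nonneg fun w _ ↦ (exp_pos _).le
  have h_self : softmax (update z i c) i - softmax (update z i x) i =
      R / (exp x + R) - R / (exp c + R) := by
    rw [softmax_update_self, softmax_update_self]
    field_simp
    ring
  have h_ne : ∀ j ∈ univ.erase i, |softmax (update z i c) j - softmax (update z i x) j| =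
      exp (z j) * |1 / (exp c + R) - 1 / (exp x + R)| := fun j hj ↦ by
    rw [softmax_update_of_ne _ (ne_of_mem_erase hj), softmax_update_of_ne _ (ne_of_mem_erase hj),
      div_eq_mul_one_div (exp (z j)), div_eq_mul_one_div (exp (z j)), ← mul_sub, abs_mul,
      abs_of_pos (exp_pos _)]
  have h_rest :
      R * |1 / (exp c + R) - 1 / (exp x + R)| = |R / (exp x + R) - R / (exp c + R)| := by
    rw [← abs_of_nonneg hR, ← abs_mul, abs_of_nonneg hR, abs_sub_comm, mul_sub, mul_one_div,
      mul_one_div]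
  rw [← add_sum_erase _ _ (mem_univ i), sum_congr rfl h_ne, ← sum_mul, h_rest, h_self]
  linarith [abs_div_exp_add_sub_le hR x c, abs_sub_comm x c]

lemma sum_abs_softmax_update_sub_softmax_le {V : ℕ} (z : Fin V → ℝ) (i : Fin V) (c : ℝ) :
    ∑ j, |softmax (update z i c) j - softmax z j| ≤ |c - z i| / 2 := by
  simpa only [update_eq_self] using sum_abs_softmax_update_sub_le z i c (z i)

lemma dist_toLp_one {ι : Type*} [Fintype ι] (x y : ι → ℝ) :
    dist (WithLp.toLp 1 x) (WithLp.toLp 1 y) = ∑ i, |x i - y i| := by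
  simp [PiLp.dist_eq_of_L1, Real.dist_eq]

theorem softmax_lipschitz_l1_general {V : ℕ} (a b : Fin V → ℝ) :
    ∑ v, |softmax a v - softmax b v| ≤ (1 / 2) * ∑ v, |a v - b v| := by
  have h := dist_le_mul_sum_of_dist_update_le (fun z ↦ WithLp.toLp 1 (softmax z)) (K := 1 / 2)
    (fun z i c ↦ by
      rw [dist_toLp_one, one_div_mul_eq_div]
      exact sum_abs_softmax_update_sub_softmax_le z i c) a b
  rwa [dist_toLp_one] at h

/-- Softmax is ½-Lipschitz from ℓ¹ to ℓ¹. -/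
theorem softmax_lipschitz_l1 {V : ℕ} (hV : 0 < V) (a b : Fin V → ℝ) :
    ∑ v, |softmax a v - softmax b v| ≤ (1 / 2) * ∑ v, |a v - b v| :=
  softmax_lipschitz_l1_general a b
end

section
/- Let ℓ⋆, η ∈ ℝ^V and define g(η) = KL(softmax(ℓ⋆) ‖ softmax(ℓ⋆ + η)). Then g(η) ≤ (1/4)‖η‖₂². -/
/-!
Put `K t = log ∑ exp (ℓ + t η)`, the cumulant generating function of `η` under `softmax ℓ`.
The divergence equals `K 1 - K 0 - K' 0`, and `K'' t` is the variance of `η` under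
`softmax (ℓ + t η)`, i.e. `ηᵀ H_soft η`. A variance is at most the mean squared deviation
from the midpoint `c` of the range of `η`, and
`(η v - c)² ≤ ((max η - min η) / 2)² ≤ ½ ‖η‖²`.
Taylor's bound `K 1 ≤ K 0 + K' 0 + ½ sup K''` then gives `¼ ‖η‖²`.
-/

open Finset Real

theorem image_le_add_deriv_mul_add_of_second_deriv_le {f f' f'' : ℝ → ℝ} {M a b : ℝ}
    (hf : ∀ t, HasDerivAt f (f' t) t) (hf' : ∀ t, HasDerivAt f' (f'' t) t)
    (hM : ∀ t, f'' t ≤ M) (hab : a ≤ b) :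
    f b ≤ f a + f' a * (b - a) + M / 2 * (b - a) ^ 2 := by
  have hslope : ∀ t, a ≤ t → f' t - f' a ≤ M * (t - a) :=
    fun t hat => image_sub_le_mul_sub_of_deriv_le (fun t => (hf' t).differentiableAt)
      (fun t => (hf' t).deriv ▸ hM t) hat
  have hg : ∀ t, HasDerivAt (fun t => f t - f' a * t - M / 2 * (t - a) ^ 2)
      (f' t - f' a - M * (t - a)) t := fun t => by
    refine (((hf t).fun_sub ((hasDerivAt_id' t).const_mul (f' a))).fun_sub
      ((((hasDerivAt_id' t).sub_const a).fun_pow 2).const_mul (M / 2))).congr_deriv ?_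
    norm_num
    ring
  have hanti : AntitoneOn (fun t => f t - f' a * t - M / 2 * (t - a) ^ 2) (Set.Ici a) :=
    antitoneOn_of_hasDerivWithinAt_nonpos (convex_Ici a)
      (HasDerivAt.continuousOn fun t _ => hg t) (fun t _ => (hg t).hasDerivWithinAt)
      fun t ht => by
        rw [interior_Ici] at ht
        linarith [hslope t ht.le]
  have := hanti Set.self_mem_Ici hab hab
  simp only [sub_self] at this
  linarith

lemma exists_sq_sub_le_half_sum_sq {ι : Type*} [Fintype ι] (x : ι → ℝ) :
    ∃ c : ℝ, ∀ i, (x i - c) ^ 2 ≤ (1 / 2) * ∑ j, x j ^ 2 := by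
  classical
  cases isEmpty_or_nonempty ι
  · exact ⟨0, isEmptyElim⟩
  obtain ⟨iM, -, hM⟩ := exists_max_image univ x univ_nonempty
  obtain ⟨im, -, hm⟩ := exists_min_image univ x univ_nonempty
  refine ⟨(x iM + x im) / 2, fun i => ?_⟩
  have hrange : (x i - (x iM + x im) / 2) ^ 2 ≤ ((x iM - x im) / 2) ^ 2 := by
    nlinarith [mul_nonneg (sub_nonneg.2 (hM i (mem_univ i)))
      (sub_nonneg.2 (hm i (mem_univ i)))]
  have hext : ((x iM - x im) / 2) ^ 2 ≤ (1 / 2) * ∑ j, x j ^ 2 := by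
    by_cases h : iM = im
    · rw [h, sub_self, zero_div, zero_pow two_ne_zero]
      exact mul_nonneg (by norm_num) (sum_nonneg fun j _ => sq_nonneg (x j))
    · have hpair : x iM ^ 2 + x im ^ 2 ≤ ∑ j, x j ^ 2 := by
        rw [← sum_pair h (f := fun j => x j ^ 2)]
        exact sum_le_sum_of_subset_of_nonneg (subset_univ _) fun j _ _ => sq_nonneg (x j)
      nlinarith [sq_nonneg (x iM + x im)]
  exact hrange.trans hext

lemma sum_mul_sq_sub_sq_sum_mul_le_half_sum_sq {ι : Type*} [Fintype ι] {q : ι → ℝ}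
    (hq : ∀ i, 0 ≤ q i) (hq1 : ∑ i, q i = 1) (x : ι → ℝ) :
    ∑ i, q i * x i ^ 2 - (∑ i, q i * x i) ^ 2 ≤ (1 / 2) * ∑ i, x i ^ 2 := by
  obtain ⟨c, hc⟩ := exists_sq_sub_le_half_sum_sq x
  have hsq : ∑ i, q i * (x i - c) ^ 2
      = ∑ i, q i * x i ^ 2 - 2 * c * ∑ i, q i * x i + c ^ 2 := by
    have hexpand : ∀ i,
        q i * (x i - c) ^ 2 = q i * x i ^ 2 - 2 * c * (q i * x i) + c ^ 2 * q i :=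
      fun i => by ring
    simp only [hexpand, sum_add_distrib, sum_sub_distrib, ← mul_sum, hq1, mul_one]
  have hlin : ∑ i, q i * (x i - c) = ∑ i, q i * x i - c := by
    simp only [mul_sub, sum_sub_distrib, ← sum_mul, hq1, one_mul]
  calc ∑ i, q i * x i ^ 2 - (∑ i, q i * x i) ^ 2
      = ∑ i, q i * (x i - c) ^ 2 - (∑ i, q i * (x i - c)) ^ 2 := by rw [hsq, hlin]; ring
    _ ≤ ∑ i, q i * ((1 / 2) * ∑ j, x j ^ 2) := by
      nlinarith [sq_nonneg (∑ i, q i * (x i - c)),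
        sum_le_sum fun i (_ : i ∈ univ) => mul_le_mul_of_nonneg_left (hc i) (hq i)]
    _ = (1 / 2) * ∑ i, x i ^ 2 := by rw [← sum_mul, hq1, one_mul]

lemma hasDerivAt_sum_exp_add_mul_mul {ι : Type*} [Fintype ι] (a b c : ι → ℝ) (t : ℝ) :
    HasDerivAt (fun t => ∑ i, exp (a i + t * b i) * c i)
      (∑ i, exp (a i + t * b i) * (b i * c i)) t :=
  HasDerivAt.fun_sum fun i _ =>
    ((((hasDerivAt_mul_const (b i)).const_add (a i)).exp.mul_const (c i))).congr_deriv (by ring)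

lemma hasDerivAt_sum_exp_add_mul {ι : Type*} [Fintype ι] (a b : ι → ℝ) (t : ℝ) :
    HasDerivAt (fun t => ∑ i, exp (a i + t * b i)) (∑ i, exp (a i + t * b i) * b i) t := by
  simpa using hasDerivAt_sum_exp_add_mul_mul a b 1 t

lemma sum_exp_pos {ι : Type*} [Fintype ι] [Nonempty ι] (z : ι → ℝ) : 0 < ∑ i, exp (z i) :=
  sum_pos (fun i _ => exp_pos (z i)) univ_nonempty

section Softmax

variable {V : ℕ}

lemma softmax_pos (z : Fin V → ℝ) (v : Fin V) : 0 < softmax z v :=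
  have : Nonempty (Fin V) := ⟨v⟩
  div_pos (exp_pos (z v)) (sum_exp_pos z)

lemma sum_softmax [Nonempty (Fin V)] (z : Fin V → ℝ) : ∑ v, softmax z v = 1 := by
  simp only [softmax, ← sum_div]
  exact div_self (sum_exp_pos z).ne'

lemma log_softmax (z : Fin V → ℝ) (v : Fin V) :
    log (softmax z v) = z v - log (∑ w, exp (z w)) := by
  have : Nonempty (Fin V) := ⟨v⟩
  rw [softmax, log_div (exp_ne_zero _) (sum_exp_pos z).ne', log_exp]

lemma sum_softmax_mul (z x : Fin V → ℝ) :
    ∑ v, softmax z v * x v = (∑ v, exp (z v) * x v) / ∑ w, exp (z w) := by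
  simp only [softmax, div_mul_eq_mul_div, ← sum_div]

lemma kl_softmax_eq [Nonempty (Fin V)] (ℓ η : Fin V → ℝ) :
    ∑ v, softmax ℓ v * log (softmax ℓ v / softmax (fun w => ℓ w + η w) v)
      = log (∑ w, exp (ℓ w + η w)) - log (∑ w, exp (ℓ w))
        - ∑ v, softmax ℓ v * η v := by
  have hterm : ∀ v, softmax ℓ v * log (softmax ℓ v / softmax (fun w => ℓ w + η w) v)
      = softmax ℓ v * (log (∑ w, exp (ℓ w + η w)) - log (∑ w, exp (ℓ w)))
        - softmax ℓ v * η v := fun v => by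
    rw [log_div (softmax_pos _ _).ne' (softmax_pos _ _).ne', log_softmax, log_softmax]
    ring
  rw [sum_congr rfl fun v _ => hterm v, sum_sub_distrib, ← sum_mul, sum_softmax, one_mul]

variable [Nonempty (Fin V)] (ℓ η : Fin V → ℝ) (t : ℝ)

lemma hasDerivAt_log_sum_exp_add_mul :
    HasDerivAt (fun t => log (∑ w, exp (ℓ w + t * η w)))
      (∑ v, softmax (fun w => ℓ w + t * η w) v * η v) t :=
  ((hasDerivAt_sum_exp_add_mul ℓ η t).log (sum_exp_pos _).ne').congr_deriv
    (sum_softmax_mul _ _).symm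

lemma hasDerivAt_sum_softmax_add_mul_mul :
    HasDerivAt (fun t => ∑ v, softmax (fun w => ℓ w + t * η w) v * η v)
      (∑ v, softmax (fun w => ℓ w + t * η w) v * η v ^ 2
        - (∑ v, softmax (fun w => ℓ w + t * η w) v * η v) ^ 2) t := by
  simp only [sum_softmax_mul, sq]
  refine ((hasDerivAt_sum_exp_add_mul_mul ℓ η η t).div (hasDerivAt_sum_exp_add_mul ℓ η t)
    (sum_exp_pos _).ne').congr_deriv ?_
  field_simp

end Softmax

/-- `KL(softmax ℓ⋆ ‖ softmax (ℓ⋆ + η)) ≤ (1/4) ‖η‖₂²`. -/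
theorem kl_softmax_le_quarter_sq {V : ℕ} (hV : 0 < V) (ℓ η : Fin V → ℝ) :
    ∑ v, softmax ℓ v * Real.log (softmax ℓ v / softmax (fun w => ℓ w + η w) v)
      ≤ (1 / 4) * ∑ v, (η v) ^ 2 := by
  have : Nonempty (Fin V) := ⟨⟨0, hV⟩⟩
  have htaylor := image_le_add_deriv_mul_add_of_second_deriv_le
    (hasDerivAt_log_sum_exp_add_mul ℓ η) (hasDerivAt_sum_softmax_add_mul_mul ℓ η)
    (fun t => sum_mul_sq_sub_sq_sum_mul_le_half_sum_sq (fun v => (softmax_pos _ v).le)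
      (sum_softmax _) η) zero_le_one
  simp only [zero_mul, add_zero, one_mul, sub_zero, one_pow, mul_one] at htaylor
  rw [kl_softmax_eq]
  linarith
end

section
/- Let Y be a categorical random variable with distribution p ∈ ℝ^V and let ξ̄ ∈ ℝ^V be a random vector with mean-zero, jointly independent coordinates, independent of Y. Then the expectation of the third central moment Σ_v p_v (ξ̄_v − pᵀξ̄)³ equals Σ_v p_v (1 − p_v)(1 − 2 p_v) κ₃(ξ̄_v), where κ₃(ξ̄_v) = E[ξ̄_v³] is the third cumulant of the v-th coordinate. -/
/-!
Writing `ξ_v - pᵀξ = ∑_w (δ_vw - p_w) ξ_w` and expanding the cube, every mixed moment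
`E[ξ_a ξ_b ξ_c]` with an index different from the other two vanishes: by independence it factors
off a mean-zero `E[ξ_c]`. Only the diagonal survives, so
`E[(ξ_v - pᵀξ)³] = ∑_a (δ_va - p_a)³ κ₃(ξ_a)`, and averaging over `v` with weights `p`
(which sum to one) leaves the coefficient `p_v (1 - p_v)³ + p_v⁴ - p_v³ = p_v (1 - p_v)(1 - 2 p_v)`
in front of `κ₃(ξ_v)`.
-/

open MeasureTheory ProbabilityTheory Finset

namespace MeasureTheory.MemLp

variable {Ω : Type*} [MeasurableSpace Ω] {μ : Measure Ω}

theorem integrable_mul_mul {f g h : Ω → ℝ} (hf : MemLp f 3 μ) (hg : MemLp g 3 μ)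
    (hh : MemLp h 3 μ) : Integrable (fun ω => f ω * g ω * h ω) μ := by
  have : ENNReal.HolderTriple 3 3 (3 / 2) :=
    ⟨by rw [ENNReal.inv_div (by norm_num) (by norm_num), ← two_mul, ← div_eq_mul_inv]⟩
  have : ENNReal.HolderTriple (3 / 2) 3 1 := ⟨by
    rw [ENNReal.inv_div (by norm_num) (by norm_num), inv_one, div_eq_mul_inv, ← add_one_mul,
      show (2 : ENNReal) + 1 = 3 by norm_num, ENNReal.mul_inv_cancel (by norm_num) (by norm_num)]⟩
  exact memLp_one_iff_integrable.mp (hh.mul' (hg.mul' hf (r := 3 / 2)))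

end MeasureTheory.MemLp

section ThirdMoments

variable {ι Ω : Type*} [MeasurableSpace Ω] {μ : Measure Ω} {ξ : ι → Ω → ℝ}

theorem integral_mul_mul_eq_zero_of_iIndepFun (hindep : iIndepFun ξ μ)
    (hξ : ∀ i, AEMeasurable (ξ i) μ) (hmean : ∀ i, ∫ ω, ξ i ω ∂μ = 0) {i j k : ι}
    (hik : i ≠ k) (hjk : j ≠ k) : ∫ ω, ξ i ω * ξ j ω * ξ k ω ∂μ = 0 := by
  have := (hindep.indepFun_mul_left₀ hξ i j k hik hjk).integral_mul_eq_mul_integral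
    ((hξ i).mul (hξ j)).aestronglyMeasurable (hξ k).aestronglyMeasurable
  simpa [hmean k] using this

theorem integral_mul_mul_of_iIndepFun [DecidableEq ι] (hindep : iIndepFun ξ μ)
    (hξ : ∀ i, AEMeasurable (ξ i) μ) (hmean : ∀ i, ∫ ω, ξ i ω ∂μ = 0) (i j k : ι) :
    ∫ ω, ξ i ω * ξ j ω * ξ k ω ∂μ = if i = j ∧ i = k then ∫ ω, ξ i ω ^ 3 ∂μ else 0 := by
  split_ifs with h
  · obtain ⟨rfl, rfl⟩ := h
    simp only [pow_three, mul_assoc]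
  by_cases hik : i = k
  · subst hik
    have hij : i ≠ j := fun hij => h ⟨hij, rfl⟩
    simp_rw [mul_right_comm (ξ i _) (ξ j _)]
    exact integral_mul_mul_eq_zero_of_iIndepFun hindep hξ hmean hij hij
  by_cases hjk : j = k
  · subst hjk
    simp_rw [mul_rotate (ξ i _)]
    exact integral_mul_mul_eq_zero_of_iIndepFun hindep hξ hmean (Ne.symm hik) (Ne.symm hik)
  exact integral_mul_mul_eq_zero_of_iIndepFun hindep hξ hmean hik hjk

variable [Fintype ι]

theorem integrable_sum_mul_pow_three (hmom : ∀ i, MemLp (ξ i) 3 μ) (q : ι → ℝ) :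
    Integrable (fun ω => (∑ i, q i * ξ i ω) ^ 3) μ := by
  have hsum : MemLp (fun ω => ∑ i, q i * ξ i ω) 3 μ :=
    memLp_finsetSum _ fun i _ => (hmom i).const_mul (q i)
  simpa only [pow_three, mul_assoc] using hsum.integrable_mul_mul hsum hsum

theorem integral_sum_mul_pow_three_of_iIndepFun (hindep : iIndepFun ξ μ)
    (hmom : ∀ i, MemLp (ξ i) 3 μ) (hmean : ∀ i, ∫ ω, ξ i ω ∂μ = 0) (q : ι → ℝ) :
    ∫ ω, (∑ i, q i * ξ i ω) ^ 3 ∂μ = ∑ i, q i ^ 3 * ∫ ω, ξ i ω ^ 3 ∂μ := by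
  classical
  have hint (i j k : ι) : Integrable (fun ω => q i * q j * q k * (ξ i ω * ξ j ω * ξ k ω)) μ :=
    ((hmom i).integrable_mul_mul (hmom j) (hmom k)).const_mul _
  have hexpand (ω : Ω) : (∑ i, q i * ξ i ω) ^ 3
      = ∑ i, ∑ j, ∑ k, q i * q j * q k * (ξ i ω * ξ j ω * ξ k ω) := by
    simp only [pow_three, mul_sum, sum_mul]
    exact sum_congr rfl fun i _ => sum_congr rfl fun j _ => sum_congr rfl fun k _ => by ring
  simp_rw [hexpand, integral_finsetSum _ fun _ _ => integrable_finsetSum _ fun _ _ =>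
      integrable_finsetSum _ fun _ _ => hint _ _ _,
    integral_finsetSum _ fun _ _ => integrable_finsetSum _ fun _ _ => hint _ _ _,
    integral_finsetSum _ fun _ _ => hint _ _ _, integral_const_mul,
    integral_mul_mul_of_iIndepFun hindep (fun i => (hmom i).aestronglyMeasurable.aemeasurable)
      hmean]
  simp [ite_and, pow_three, mul_assoc]

end ThirdMoments

theorem sum_mul_sum_ite_sub_pow_three {ι : Type*} [Fintype ι] [DecidableEq ι] (p κ : ι → ℝ)
    (hp : ∑ i, p i = 1) :
    ∑ v, p v * ∑ i, ((if i = v then 1 else 0) - p i) ^ 3 * κ i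
      = ∑ v, p v * (1 - p v) * (1 - 2 * p v) * κ v := by
  have hinner (v : ι) : ∑ i, ((if i = v then 1 else 0) - p i) ^ 3 * κ i
      = ((1 - p v) ^ 3 + p v ^ 3) * κ v - ∑ i, p i ^ 3 * κ i := by
    have hterm (i : ι) : ((if i = v then 1 else 0) - p i) ^ 3 * κ i
        = (if i = v then ((1 - p i) ^ 3 + p i ^ 3) * κ i else 0) - p i ^ 3 * κ i := by
      by_cases h : i = v
      · subst h; simp only [if_true]; ring
      · simp only [if_neg h]; ring
    simp only [hterm, sum_sub_distrib, sum_ite_eq', mem_univ, if_true]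
  calc ∑ v, p v * ∑ i, ((if i = v then 1 else 0) - p i) ^ 3 * κ i
      = ∑ v, p v * ((1 - p v) ^ 3 + p v ^ 3) * κ v - (∑ v, p v) * ∑ i, p i ^ 3 * κ i := by
        simp only [hinner, mul_sub, sum_sub_distrib, sum_mul, mul_assoc]
    _ = ∑ v, p v * (1 - p v) * (1 - 2 * p v) * κ v := by
        rw [hp, one_mul, ← sum_sub_distrib]
        exact sum_congr rfl fun v _ => by ring

theorem third_central_moment_closed_form_general {V : ℕ} {Ω : Type*}
    [MeasurableSpace Ω] (μ : Measure Ω)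
    (p : Fin V → ℝ) (hp1 : ∑ v, p v = 1)
    (ξ : Fin V → Ω → ℝ)
    (hindep : iIndepFun ξ μ)
    (hmom : ∀ v, MemLp (ξ v) 3 μ)
    (hmean : ∀ v, (∫ ω, ξ v ω ∂μ) = 0) :
    (∫ ω, ∑ v, p v * (ξ v ω - ∑ w, p w * ξ w ω) ^ 3 ∂μ)
      = ∑ v, p v * (1 - p v) * (1 - 2 * p v) * ∫ ω, (ξ v ω) ^ 3 ∂μ := by
  have hcentered (v : Fin V) (ω : Ω) :
      ξ v ω - ∑ w, p w * ξ w ω = ∑ w, ((if w = v then 1 else 0) - p w) * ξ w ω := by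
    simp [sub_mul, sum_sub_distrib]
  simp_rw [hcentered]
  rw [integral_finsetSum _ fun v _ => (integrable_sum_mul_pow_three hmom _).const_mul (p v)]
  simp_rw [integral_const_mul, integral_sum_mul_pow_three_of_iIndepFun hindep hmom hmean]
  exact sum_mul_sum_ite_sub_pow_three p _ hp1

/-- Closed form for the expected third central moment of `ξ̄` under a fixed
categorical distribution `p`: with jointly independent, mean-zero coordinates,
`E[∑_v p_v (ξ̄_v − pᵀξ̄)³] = ∑_v p_v (1 − p_v)(1 − 2 p_v) E[ξ̄_v³]`. -/
theorem third_central_moment_closed_form {V : ℕ} {Ω : Type*}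
    [MeasurableSpace Ω] (μ : Measure Ω) [IsProbabilityMeasure μ]
    (p : Fin V → ℝ) (hp0 : ∀ v, 0 ≤ p v) (hp1 : ∑ v, p v = 1)
    (ξ : Fin V → Ω → ℝ) (hmeas : ∀ v, Measurable (ξ v))
    (hindep : iIndepFun ξ μ)
    (hmom : ∀ v, MemLp (ξ v) 3 μ)
    (hmean : ∀ v, (∫ ω, ξ v ω ∂μ) = 0) :
    (∫ ω, ∑ v, p v * (ξ v ω - ∑ w, p w * ξ w ω) ^ 3 ∂μ)
      = ∑ v, p v * (1 - p v) * (1 - 2 * p v) * ∫ ω, (ξ v ω) ^ 3 ∂μ :=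
  third_central_moment_closed_form_general μ p hp1 ξ hindep hmom hmean
end

section
/- Let P and Q be probability measures on a finite set with Q(y) > 0 whenever P(y) > 0, and write f(y) = log(P(y)/Q(y)) on the support of P. Then E_P[|f|] = KL(P ‖ Q) + 2 Σ_{y : Q(y) > P(y)} P(y) log(Q(y)/P(y)), and moreover Σ_{y: Q(y) > P(y)} P(y) log(Q(y)/P(y)) ≤ d_TV(P, Q), so that E_P[|log(P/Q)|] ≤ KL(P ‖ Q) + 2 d_TV(P, Q). -/
/-!
Since `log (q/p) = -log (p/q)` and `log (p/q)` has the sign of `p - q`, the two sides of the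
identity differ pointwise by `2 p log (q/p)` exactly where `p < q`. There `log x ≤ x - 1` bounds
`p log (q/p)` by `q - p`, and because `P` and `Q` have equal mass, `∑_{P < Q} (Q - P)` is half of
`∑ |P - Q|`.
-/

open Real Finset

lemma mul_abs_log_div_eq {p q : ℝ} (hp : 0 ≤ p) (hq : 0 < p → 0 < q) :
    p * |log (p / q)| = p * log (p / q) + if p < q then 2 * (p * log (q / p)) else 0 := by
  rw [← inv_div p q, log_inv]
  obtain rfl | hp := hp.eq_or_lt
  · simp
  have hq := hq hp
  split_ifs with hpq
  · rw [abs_of_neg (log_neg (div_pos hp hq) ((div_lt_one hq).2 hpq))]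
    ring
  · rw [abs_of_nonneg (log_nonneg ((one_le_div hq).2 (not_lt.1 hpq)))]
    ring

lemma mul_log_div_le_sub {p q : ℝ} (hp : 0 ≤ p) (hpq : p ≤ q) : p * log (q / p) ≤ q - p := by
  obtain rfl | hp := hp.eq_or_lt
  · simpa using hpq
  calc p * log (q / p) ≤ p * (q / p - 1) :=
        mul_le_mul_of_nonneg_left (log_le_sub_one_of_pos (div_pos (hp.trans_le hpq) hp)) hp.le
    _ = q - p := by field_simp

lemma two_mul_sum_filter_lt_sub_eq_sum_abs_sub {ι : Type*} (s : Finset ι) (f g : ι → ℝ)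
    (h : ∑ i ∈ s, f i = ∑ i ∈ s, g i) :
    2 * ∑ i ∈ s with f i < g i, (g i - f i) = ∑ i ∈ s, |f i - g i| := by
  have hbalance : ∑ i ∈ s with f i < g i, (g i - f i)
      + ∑ i ∈ s with ¬ f i < g i, (g i - f i) = 0 := by
    rw [sum_filter_add_sum_filter_not, sum_sub_distrib, h, sub_self]
  have habs : ∑ i ∈ s, |f i - g i| = ∑ i ∈ s with f i < g i, (g i - f i)
      - ∑ i ∈ s with ¬ f i < g i, (g i - f i) := by
    rw [← sum_filter_add_sum_filter_not s (fun i => f i < g i), sub_eq_add_neg, ← sum_neg_distrib]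
    congr 1 <;> refine sum_congr rfl fun i hi => ?_ <;> have hi := (mem_filter.1 hi).2
    · rw [abs_of_neg (sub_neg.2 hi), neg_sub]
    · rw [abs_of_nonneg (sub_nonneg.2 (not_lt.1 hi)), neg_sub]
  linarith

open scoped Classical

theorem abs_log_ratio_expectation_general {α : Type*} [Fintype α]
    (P Q : α → ℝ)
    (hP0 : ∀ y, 0 ≤ P y) (hP1 : ∑ y, P y = 1)
    (hQ1 : ∑ y, Q y = 1)
    (hsupp : ∀ y, 0 < P y → 0 < Q y) :
    (∑ y, P y * |Real.log (P y / Q y)|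
      = (∑ y, P y * Real.log (P y / Q y))
        + 2 * ∑ y ∈ Finset.univ.filter (fun y => P y < Q y),
            P y * Real.log (Q y / P y)) ∧
    (∑ y ∈ Finset.univ.filter (fun y => P y < Q y),
        P y * Real.log (Q y / P y)
      ≤ ∑ y ∈ Finset.univ.filter (fun y => P y < Q y), (Q y - P y)) ∧
    (∑ y, P y * |Real.log (P y / Q y)|
      ≤ (∑ y, P y * Real.log (P y / Q y))
        + 2 * ((1 / 2) * ∑ y, |P y - Q y|)) := by
  have hsplit : ∑ y, P y * |log (P y / Q y)|
      = ∑ y, P y * log (P y / Q y) + 2 * ∑ y with P y < Q y, P y * log (Q y / P y) := by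
    rw [mul_sum, sum_filter, ← sum_add_distrib]
    exact sum_congr rfl fun y _ => mul_abs_log_div_eq (hP0 y) (hsupp y)
  have hneg : ∑ y with P y < Q y, P y * log (Q y / P y) ≤ ∑ y with P y < Q y, (Q y - P y) :=
    sum_le_sum fun y hy => mul_log_div_le_sub (hP0 y) (mem_filter.1 hy).2.le
  have htv := two_mul_sum_filter_lt_sub_eq_sum_abs_sub univ P Q (hP1.trans hQ1.symm)
  refine ⟨hsplit, hneg, ?_⟩
  rw [hsplit]
  linarith

/-- Splitting `E_P[|log(P/Q)|]` into KL plus twice the negative part, the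
bound of the negative part by total variation, and the combined bound. -/
theorem abs_log_ratio_expectation {α : Type*} [Fintype α]
    (P Q : α → ℝ)
    (hP0 : ∀ y, 0 ≤ P y) (hP1 : ∑ y, P y = 1)
    (hQ0 : ∀ y, 0 ≤ Q y) (hQ1 : ∑ y, Q y = 1)
    (hsupp : ∀ y, 0 < P y → 0 < Q y) :
    (∑ y, P y * |Real.log (P y / Q y)|
      = (∑ y, P y * Real.log (P y / Q y))
        + 2 * ∑ y ∈ Finset.univ.filter (fun y => P y < Q y),
            P y * Real.log (Q y / P y)) ∧
    (∑ y ∈ Finset.univ.filter (fun y => P y < Q y),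
        P y * Real.log (Q y / P y)
      ≤ ∑ y ∈ Finset.univ.filter (fun y => P y < Q y), (Q y - P y)) ∧
    (∑ y, P y * |Real.log (P y / Q y)|
      ≤ (∑ y, P y * Real.log (P y / Q y))
        + 2 * ((1 / 2) * ∑ y, |P y - Q y|)) :=
  abs_log_ratio_expectation_general P Q hP0 hP1 hQ1 hsupp
end

section
/- Let P and Q be probability measures on a finite set with Q positive on the support of P. Then E_P[|log(P/Q)|] ≤ KL(P ‖ Q) + √(2 · KL(P ‖ Q)). -/
/-!
Split `|log (P/Q)|` into its positive and negative parts. Where `P < Q` the negative part is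
controlled by `log t ≤ t - 1`, giving `P log (Q/P) ≤ Q - P`; summed, this yields
`E_P |log (P/Q)| ≤ KL(P‖Q) + ‖P - Q‖₁`. Pinsker's inequality `‖P - Q‖₁ ≤ √(2 KL(P‖Q))` follows
from the pointwise bound `3 (x - 1)² ≤ (2x + 4) (x log x - x + 1)` and Cauchy–Schwarz.
-/

open Real Set Finset InformationTheory

lemma le_of_hasDerivAt_of_deriv_sign {f f' : ℝ → ℝ} {a c x : ℝ} (hc : a < c) (hx : a < x)
    (hf : ∀ y ∈ Ioi a, HasDerivAt f (f' y) y) (hleft : ∀ y ∈ Ioo a c, f' y ≤ 0)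
    (hright : ∀ y ∈ Ioi c, 0 ≤ f' y) : f c ≤ f x := by
  rcases le_total c x with hcx | hxc
  · refine monotoneOn_of_hasDerivWithinAt_nonneg (convex_Ici c)
      (fun y hy ↦ (hf y (hc.trans_le hy)).continuousAt.continuousWithinAt)
      (fun y hy ↦ ?_) (fun y hy ↦ hright y (by simpa using hy)) self_mem_Ici hcx hcx
    rw [interior_Ici] at hy ⊢
    exact (hf y (hc.trans hy)).hasDerivWithinAt
  · refine antitoneOn_of_hasDerivWithinAt_nonpos (convex_Ioc a c)
      (fun y hy ↦ (hf y hy.1).continuousAt.continuousWithinAt)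
      (fun y hy ↦ ?_) (fun y hy ↦ hleft y (by simpa using hy)) ⟨hx, hxc⟩ ⟨hc, le_rfl⟩ hxc
    rw [interior_Ioc] at hy ⊢
    exact (hf y hy.1).hasDerivWithinAt

lemma monotoneOn_add_one_mul_log_sub :
    MonotoneOn (fun x : ℝ ↦ (x + 1) * log x - 2 * (x - 1)) (Ioi 0) := by
  refine monotoneOn_of_hasDerivWithinAt_nonneg (f' := fun x ↦ log x - 1 + x⁻¹) (convex_Ioi 0)
    ?_ (fun x hx ↦ ?_) (fun x hx ↦ ?_)
  · exact ContinuousOn.sub (ContinuousOn.mul (by fun_prop)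
      (continuousOn_log.mono fun x hx ↦ ne_of_gt hx)) (by fun_prop)
  · rw [interior_Ioi] at hx ⊢
    have hx : x ≠ 0 := ne_of_gt hx
    refine HasDerivAt.hasDerivWithinAt <| HasDerivAt.congr_deriv
      ((((hasDerivAt_id' x).add_const 1).mul (hasDerivAt_log hx)).sub
        (((hasDerivAt_id' x).sub_const 1).const_mul 2)) ?_
    field_simp
    ring
  · rw [interior_Ioi] at hx
    linarith [one_sub_inv_le_log_of_pos (mem_Ioi.mp hx)]

lemma hasDerivAt_mul_klFun_sub_sq {x : ℝ} (hx : x ≠ 0) :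
    HasDerivAt (fun y ↦ (2 * y + 4) * klFun y - 3 * (y - 1) ^ 2)
      (4 * ((x + 1) * log x - 2 * (x - 1))) x := by
  refine HasDerivAt.congr_deriv ((((hasDerivAt_id' x).const_mul 2).add_const 4).mul
    (hasDerivAt_klFun hx) |>.sub ((((hasDerivAt_id' x).sub_const 1).pow 2).const_mul 3)) ?_
  simp only [klFun_apply]
  ring

lemma three_mul_sq_sub_one_le_mul_klFun {x : ℝ} (hx : 0 ≤ x) :
    3 * (x - 1) ^ 2 ≤ (2 * x + 4) * klFun x := by
  rcases hx.eq_or_lt with rfl | hx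
  · norm_num [klFun_zero]
  have key := le_of_hasDerivAt_of_deriv_sign one_pos hx
    (fun y hy ↦ hasDerivAt_mul_klFun_sub_sq (ne_of_gt (mem_Ioi.mp hy)))
    (fun y hy ↦ ?_) (fun y hy ↦ ?_)
  · simpa [klFun_one] using key
  · have := monotoneOn_add_one_mul_log_sub hy.1 (mem_Ioi.mpr one_pos) hy.2.le
    simp only [log_one] at this
    linarith
  · have := monotoneOn_add_one_mul_log_sub (mem_Ioi.mpr one_pos) (mem_Ioi.mpr (one_pos.trans hy))
      hy.le
    simp only [log_one] at this
    linarith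

lemma mul_log_div_sub_add_eq_mul_klFun {p q : ℝ} (hpq : q = 0 → p = 0) :
    p * log (p / q) - p + q = q * klFun (p / q) := by
  rcases eq_or_ne q 0 with hq | hq
  · simp [hq, hpq hq]
  · rw [klFun_apply]
    field_simp
    ring

lemma three_mul_sq_sub_le_mul_klFun_div {p q : ℝ} (hp : 0 ≤ p) (hq : 0 ≤ q)
    (hpq : q = 0 → p = 0) :
    3 * (p - q) ^ 2 ≤ (2 * p + 4 * q) * (q * klFun (p / q)) := by
  rcases hq.eq_or_lt with hq | hq
  · simp [← hq, hpq hq.symm]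
  calc 3 * (p - q) ^ 2 = q ^ 2 * (3 * (p / q - 1) ^ 2) := by field_simp
    _ ≤ q ^ 2 * ((2 * (p / q) + 4) * klFun (p / q)) :=
      mul_le_mul_of_nonneg_left (three_mul_sq_sub_one_le_mul_klFun (div_nonneg hp hq.le))
        (sq_nonneg q)
    _ = (2 * p + 4 * q) * (q * klFun (p / q)) := by field_simp

lemma sum_abs_le_sqrt_mul_sqrt_of_sq_le {ι : Type*} (s : Finset ι) {a u r : ι → ℝ}
    (hu : ∀ i, 0 ≤ u i) (hr : ∀ i, 0 ≤ r i) (h : ∀ i, a i ^ 2 ≤ u i * r i) :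
    ∑ i ∈ s, |a i| ≤ √(∑ i ∈ s, u i) * √(∑ i ∈ s, r i) :=
  calc ∑ i ∈ s, |a i| ≤ ∑ i ∈ s, √(u i) * √(r i) := sum_le_sum fun i _ ↦ by
        rw [← sqrt_mul (hu i), ← sqrt_sq_eq_abs]
        exact sqrt_le_sqrt (h i)
    _ ≤ √(∑ i ∈ s, u i) * √(∑ i ∈ s, r i) := sum_sqrt_mul_sqrt_le s hu hr

theorem sum_abs_sub_le_sqrt_two_mul_sum_mul_log_div {ι : Type*} [Fintype ι] (P Q : ι → ℝ)
    (hP0 : ∀ i, 0 ≤ P i) (hP1 : ∑ i, P i = 1) (hQ0 : ∀ i, 0 ≤ Q i) (hQ1 : ∑ i, Q i = 1)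
    (hac : ∀ i, Q i = 0 → P i = 0) :
    ∑ i, |P i - Q i| ≤ √(2 * ∑ i, P i * log (P i / Q i)) := by
  have hu : ∑ i, (2 * P i + 4 * Q i) / 3 = 2 := by
    rw [← sum_div, sum_add_distrib, ← mul_sum, ← mul_sum, hP1, hQ1]
    norm_num
  have hr : ∑ i, Q i * klFun (P i / Q i) = ∑ i, P i * log (P i / Q i) := by
    simp only [← mul_log_div_sub_add_eq_mul_klFun (hac _), sum_add_distrib, sum_sub_distrib,
      hP1, hQ1, sub_add_cancel]
  calc ∑ i, |P i - Q i|
      ≤ √(∑ i, (2 * P i + 4 * Q i) / 3) * √(∑ i, Q i * klFun (P i / Q i)) :=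
        sum_abs_le_sqrt_mul_sqrt_of_sq_le _
          (fun i ↦ by linarith [hP0 i, hQ0 i])
          (fun i ↦ mul_nonneg (hQ0 i) (klFun_nonneg (div_nonneg (hP0 i) (hQ0 i))))
          (fun i ↦ by
            linarith [three_mul_sq_sub_le_mul_klFun_div (hP0 i) (hQ0 i) (hac i)])
    _ = √(2 * ∑ i, P i * log (P i / Q i)) := by rw [hu, hr, sqrt_mul zero_le_two]

lemma mul_abs_log_div_le {p q : ℝ} (hp : 0 ≤ p) (hq : 0 ≤ q) (hpq : q = 0 → p = 0) :
    p * |log (p / q)| ≤ p * log (p / q) + (|p - q| + (q - p)) := by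
  rcases hp.eq_or_lt with rfl | hp
  · simpa using add_nonneg (abs_nonneg q) hq
  have hq : 0 < q := hq.lt_of_ne fun h ↦ hp.ne' (hpq h.symm)
  have hneg : -(p * log (p / q)) ≤ q - p :=
    calc -(p * log (p / q)) = p * log (q / p) := by rw [← inv_div, log_inv, mul_neg, neg_neg]
      _ ≤ p * (q / p - 1) :=
        mul_le_mul_of_nonneg_left (log_le_sub_one_of_pos (div_pos hq hp)) hp.le
      _ = q - p := by field_simp
  rw [← abs_of_pos hp, ← abs_mul, abs_of_pos hp, abs_le]
  constructor <;> linarith [le_abs_self (p - q), neg_abs_le (p - q)]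

lemma sum_mul_abs_log_div_le {ι : Type*} (s : Finset ι) (P Q : ι → ℝ)
    (hP0 : ∀ i, 0 ≤ P i) (hQ0 : ∀ i, 0 ≤ Q i) (hPQ : ∑ i ∈ s, P i = ∑ i ∈ s, Q i)
    (hac : ∀ i, Q i = 0 → P i = 0) :
    ∑ i ∈ s, P i * |log (P i / Q i)|
      ≤ ∑ i ∈ s, P i * log (P i / Q i) + ∑ i ∈ s, |P i - Q i| := by
  have hcancel : ∑ i ∈ s, (Q i - P i) = 0 := by rw [sum_sub_distrib, hPQ, sub_self]
  calc ∑ i ∈ s, P i * |log (P i / Q i)|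
      ≤ ∑ i ∈ s, (P i * log (P i / Q i) + (|P i - Q i| + (Q i - P i))) :=
        sum_le_sum fun i _ ↦ mul_abs_log_div_le (hP0 i) (hQ0 i) (hac i)
    _ = ∑ i ∈ s, P i * log (P i / Q i) + ∑ i ∈ s, |P i - Q i| := by
        rw [sum_add_distrib, sum_add_distrib, hcancel, add_zero]

/-- `E_P[|log(P/Q)|] ≤ KL(P‖Q) + √(2 KL(P‖Q))` on a finite set
(via the TV split and Pinsker's inequality). -/
theorem abs_log_ratio_le_kl_add_sqrt {α : Type*} [Fintype α]
    (P Q : α → ℝ)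
    (hP0 : ∀ y, 0 ≤ P y) (hP1 : ∑ y, P y = 1)
    (hQ0 : ∀ y, 0 ≤ Q y) (hQ1 : ∑ y, Q y = 1)
    (hsupp : ∀ y, 0 < P y → 0 < Q y) :
    ∑ y, P y * |Real.log (P y / Q y)|
      ≤ (∑ y, P y * Real.log (P y / Q y))
        + Real.sqrt (2 * ∑ y, P y * Real.log (P y / Q y)) := by
  have hac : ∀ y, Q y = 0 → P y = 0 := fun y hQ ↦
    le_antisymm (not_lt.mp fun hP ↦ (hsupp y hP).ne' hQ) (hP0 y)
  calc ∑ y, P y * |log (P y / Q y)|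
      ≤ ∑ y, P y * log (P y / Q y) + ∑ y, |P y - Q y| :=
        sum_mul_abs_log_div_le _ P Q hP0 hQ0 (hP1.trans hQ1.symm) hac
    _ ≤ ∑ y, P y * log (P y / Q y) + √(2 * ∑ y, P y * log (P y / Q y)) := by
        gcongr
        exact sum_abs_sub_le_sqrt_two_mul_sum_mul_log_div P Q hP0 hP1 hQ0 hQ1 hac
end
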